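/- Let w be the n-th Engel word [x, y, y, ..., y] (y repeated n times) and let T be a finite metanilpotent group. If M is the subgroup generated by all w-values of T contained in the Fitting subgroup of T, then T/M is nilpotent. -/

import Mathlib

open scoped commutatorElement

/-- The iterated Engel commutator: `engelComm g a 0 = g`,
`engelComm g a (n+1) = ⁅engelComm g a n, a⁆`, so `engelComm g a n = [g,ₙ a]`. -/
def engelComm {G : Type*} [Group G] (g a : G) : ℕ → G
  | 0 => g
  | n + 1 => ⁅engelComm g a n, a⁆

/-- The Fitting subgroup: the join of all nilpotent normal subgroups. -/
def FittingSubgroup (T : Type) [Group T] : Subgroup T :=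
  ⨆ N ∈ {N : Subgroup T | N.Normal ∧ Group.IsNilpotent ↥N}, N

/-!
Let `N` be nilpotent normal with `γ_c(T) ≤ N`. The Engel values `[t,ₙ s]` with `t ∈ γ_c(T)` lie
in `N ≤ Fit(T)`, and so do their conjugates; hence modulo the normal closure `K ≤ M` of these values
`T` satisfies the `(c+n)`-Engel identity `[x,_{c+n} g] = [[x,_c g],ₙ g] = 1`. As `T` is solvable, it
remains to prove Zorn's theorem for finite solvable groups: an Engel group `G` has a nontrivial
centre, and one inducts on `G ⧸ Z(G)`.

For the centre, a nontrivial abelian normal subgroup (from the derived series) contains a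
nontrivial normal subgroup `V` of prime exponent `p`. On `V`, written additively, conjugation by
`g` is `1 - δ` with `δ^m = 0` by the Engel identity; since `End(V)` has characteristic `p`,
`(1 - δ)^(p^m) = 1 - δ^(p^m) = 1`. So the image of `G` in `Aut V` is a `p`-group, and its fixed
points in `V`, which are central in `G`, number `0` modulo `p`: there is a nontrivial one.
-/

section EngelComm

variable {G H : Type*} [Group G] [Group H]

lemma engelComm_succ (x g : G) (k : ℕ) :
    engelComm x g (k + 1) = ⁅engelComm x g k, g⁆ := rfl

lemma map_engelComm (f : G →* H) (x g : G) (k : ℕ) :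
    f (engelComm x g k) = engelComm (f x) (f g) k := by
  induction k with
  | zero => rfl
  | succ k ih => rw [engelComm_succ, engelComm_succ, map_commutatorElement, ih]

lemma engelComm_add (x g : G) (a b : ℕ) :
    engelComm x g (a + b) = engelComm (engelComm x g a) g b := by
  induction b with
  | zero => rfl
  | succ b ih => rw [← add_assoc, engelComm_succ, engelComm_succ, ih]

lemma engelComm_mem_lowerCentralSeries (x g : G) (k : ℕ) :
    engelComm x g k ∈ (⊤ : Subgroup G).lowerCentralSeries k := by
  induction k with
  | zero => exact Subgroup.mem_top x
  | succ k ih => exact Subgroup.commutator_mem_commutator ih (Subgroup.mem_top g)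

lemma engelComm_mem_of_mem_normal {N : Subgroup G} [N.Normal] {x : G} (hx : x ∈ N) (g : G)
    (k : ℕ) : engelComm x g k ∈ N := by
  induction k with
  | zero => exact hx
  | succ k ih =>
    exact Subgroup.commutator_le_left N ⊤
      (Subgroup.commutator_mem_commutator ih (Subgroup.mem_top g))

end EngelComm

lemma pow_char_pow_eq_one_of_one_sub_pow_eq_zero {R : Type*} [Ring R] (p : ℕ) [Fact p.Prime]
    [CharP R p] {u : R} {k : ℕ} (h : (1 - u) ^ k = 0) : u ^ p ^ k = 1 := by
  have hpk : (1 - u) ^ p ^ k = 0 :=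
    pow_eq_zero_of_le (Nat.lt_pow_self (Fact.out : p.Prime).one_lt).le h
  rw [sub_pow_char_pow_of_commute p k (Commute.one_left u), one_pow] at hpk
  exact (sub_eq_zero.mp hpk).symm

lemma charP_addMonoidEnd_of_nsmul_eq_zero {A : Type*} [AddCommGroup A] [Nontrivial A] (p : ℕ)
    [Fact p.Prime] (h : ∀ a : A, p • a = 0) : CharP (AddMonoid.End A) p := by
  have : Nontrivial (AddMonoid.End A) := by
    obtain ⟨a, ha⟩ := exists_ne (0 : A)
    exact ⟨⟨1, 0, fun h1 => ha (DFunLike.congr_fun h1 a)⟩⟩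
  exact (CharP.charP_iff_prime_eq_zero Fact.out).mpr (AddMonoidHom.ext h)

section ConjAddEnd

open scoped IsMulCommutative

variable {G : Type*} [Group G] (V : Subgroup G) [V.Normal] [IsMulCommutative V]

def Subgroup.conjAddEnd : G →* AddMonoid.End (Additive V) :=
  (monoidEndToAdditive V : Monoid.End V →* AddMonoid.End (Additive V)).comp
    ((MulDistribMulAction.toMonoidEnd (MulAut V) V).comp MulAut.conjNormal)

lemma Subgroup.coe_toMul_conjAddEnd_apply (g : G) (x : Additive V) :
    ((V.conjAddEnd g x).toMul : G) = g * x.toMul * g⁻¹ := rfl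

lemma Subgroup.coe_toMul_one_sub_conjAddEnd_apply (g : G) (x : Additive V) :
    (((1 - V.conjAddEnd g) x).toMul : G) = ⁅(x.toMul : G), g⁆ := by
  change ((x.toMul / (V.conjAddEnd g x).toMul : V) : G) = _
  rw [Subgroup.coe_div, coe_toMul_conjAddEnd_apply, commutatorElement_def]
  simp only [div_eq_mul_inv, mul_inv_rev, inv_inv, mul_assoc]

lemma Subgroup.coe_toMul_one_sub_conjAddEnd_pow_apply (g : G) (k : ℕ) (v : V) :
    ((((1 - V.conjAddEnd g) ^ k) (.ofMul v)).toMul : G) = engelComm (v : G) g k := by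
  induction k with
  | zero => rfl
  | succ k ih =>
    rw [pow_succ', AddMonoid.End.coe_mul, Function.comp_apply,
      coe_toMul_one_sub_conjAddEnd_apply, ih, engelComm_succ]

lemma pow_prime_pow_mem_centralizer_of_engelComm {p : ℕ} [Fact p.Prime]
    (hV : ∀ v ∈ V, v ^ p = 1) {g : G} {k : ℕ} (hg : ∀ v ∈ V, engelComm v g k = 1) :
    g ^ p ^ k ∈ Subgroup.centralizer (V : Set G) := by
  refine Subgroup.mem_centralizer_iff.mpr fun v hv => ?_
  rcases subsingleton_or_nontrivial V with hV1 | hV1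
  · obtain rfl : v = 1 := congrArg Subtype.val (Subsingleton.elim (⟨v, hv⟩ : V) 1)
    rw [one_mul, mul_one]
  have : CharP (AddMonoid.End (Additive V)) p :=
    charP_addMonoidEnd_of_nsmul_eq_zero p fun x => Subtype.ext (hV _ x.toMul.2)
  have hnil : (1 - V.conjAddEnd g) ^ k = 0 := by
    ext x
    exact (V.coe_toMul_one_sub_conjAddEnd_pow_apply g k x.toMul).trans (hg _ x.toMul.2)
  have hfix : g ^ p ^ k * v * (g ^ p ^ k)⁻¹ = v := by
    refine (V.coe_toMul_conjAddEnd_apply _ (.ofMul ⟨v, hv⟩)).symm.trans ?_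
    rw [map_pow, pow_char_pow_eq_one_of_one_sub_pow_eq_zero p hnil]
    rfl
  nth_rewrite 1 [← hfix]
  group

end ConjAddEnd

section CentralFixedPoints

variable {G : Type*} [Group G]

lemma inf_center_ne_bot_of_pow_mem_centralizer [Finite G] {V : Subgroup G} [V.Normal] {p : ℕ}
    [Fact p.Prime] (hpV : p ∣ Nat.card V)
    (hG : ∀ g : G, ∃ k, g ^ p ^ k ∈ Subgroup.centralizer (V : Set G)) :
    V ⊓ Subgroup.center G ≠ ⊥ := by
  let P := (MulAut.conjNormal : G →* MulAut V).range
  have hP : IsPGroup p P := by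
    rintro ⟨_, g, rfl⟩
    obtain ⟨k, hk⟩ := hG g
    refine ⟨k, Subtype.ext (MulEquiv.ext fun v => Subtype.ext ?_)⟩
    simp only [Subgroup.coe_pow, ← map_pow, MulAut.conjNormal_apply, OneMemClass.coe_one,
      MulAut.one_apply]
    rw [(Subgroup.mem_centralizer_iff.mp hk v v.2).symm, mul_inv_cancel_right]
  obtain ⟨z, hz, hz1⟩ := hP.exists_fixed_point_of_prime_dvd_card_of_fixed_point V hpV
    (a := 1) fun _ => smul_one _
  refine fun hbot => hz1 (Subtype.ext (Eq.symm ?_))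
  refine (Subgroup.mem_bot.mp (hbot ▸ ⟨z.2, Subgroup.mem_center_iff.mpr fun g => ?_⟩))
  have hzg : g * z * g⁻¹ = z := congrArg Subtype.val (hz ⟨MulAut.conjNormal g, g, rfl⟩)
  exact (eq_mul_inv_iff_mul_eq.mp hzg.symm).symm

end CentralFixedPoints

section ElementaryAbelian

variable {G : Type*} [Group G]

lemma exists_normal_ne_bot_isMulCommutative [Group.IsSolvable G] [Nontrivial G] :
    ∃ A : Subgroup G, A.Normal ∧ A ≠ ⊥ ∧ IsMulCommutative A := by
  classical
  obtain ⟨n, hn⟩ := Group.IsSolvable.solvable (G := G)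
  have hex : ∃ k, derivedSeries G (k + 1) = ⊥ :=
    ⟨n, le_bot_iff.mp (hn ▸ derivedSeries_antitone G n.le_succ)⟩
  refine ⟨derivedSeries G (Nat.find hex), derivedSeries_normal _ _, ?_, ?_⟩
  · cases h : Nat.find hex with
    | zero => exact top_ne_bot
    | succ j => exact Nat.find_min hex (h ▸ j.lt_succ_self)
  · rw [← Subgroup.commutator_self_eq_bot_iff, ← derivedSeries_succ]
    exact Nat.find_spec hex

variable (A : Subgroup G) [IsMulCommutative A] (p : ℕ)

def Subgroup.torsionBy : Subgroup G where
  carrier := {x | x ∈ A ∧ x ^ p = 1}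
  mul_mem' {x y} hx hy := by
    have hxy : Commute x y := congrArg Subtype.val (mul_comm' (⟨x, hx.1⟩ : A) ⟨y, hy.1⟩)
    exact ⟨mul_mem hx.1 hy.1, by rw [hxy.mul_pow, hx.2, hy.2, one_mul]⟩
  one_mem' := ⟨one_mem A, one_pow p⟩
  inv_mem' hx := ⟨inv_mem hx.1, by rw [inv_pow, hx.2, inv_one]⟩

lemma Subgroup.pow_eq_one_of_mem_torsionBy {x : G} (hx : x ∈ A.torsionBy p) : x ^ p = 1 := hx.2

instance [A.Normal] : (A.torsionBy p).Normal where
  conj_mem x hx g := ⟨Subgroup.Normal.conj_mem inferInstance x hx.1 g,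
    by rw [conj_pow, hx.2, mul_one, mul_inv_cancel]⟩

instance : IsMulCommutative (A.torsionBy p) :=
  ⟨⟨fun x y => Subtype.ext (congrArg Subtype.val (mul_comm' (⟨x, x.2.1⟩ : A) ⟨y, y.2.1⟩) :)⟩⟩

lemma Subgroup.dvd_card_torsionBy [Finite A] [Fact p.Prime] (hp : p ∣ Nat.card A) :
    p ∣ Nat.card (A.torsionBy p) := by
  obtain ⟨a, ha⟩ := exists_prime_orderOf_dvd_card' p hp
  have haV : (a : G) ∈ A.torsionBy p :=
    ⟨a.2, by rw [← Subgroup.coe_pow, ← ha, pow_orderOf_eq_one, OneMemClass.coe_one]⟩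
  simpa only [Subgroup.orderOf_coe, ha] using orderOf_dvd_natCard _ haV

end ElementaryAbelian

theorem center_ne_bot_of_engelComm_eq_one {G : Type*} [Group G] [Finite G] [Group.IsSolvable G]
    [Nontrivial G] {m : ℕ} (h : ∀ x g : G, engelComm x g m = 1) : Subgroup.center G ≠ ⊥ := by
  obtain ⟨A, _, hA, _⟩ := exists_normal_ne_bot_isMulCommutative (G := G)
  obtain ⟨p, hp, hpA⟩ := Nat.exists_prime_and_dvd ((Subgroup.one_lt_card_iff_ne_bot A).mpr hA).ne'
  have := Fact.mk hp
  refine ne_bot_of_le_ne_bot (inf_center_ne_bot_of_pow_mem_centralizer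
    (A.dvd_card_torsionBy p hpA) fun g => ⟨m, ?_⟩) inf_le_right
  exact pow_prime_pow_mem_centralizer_of_engelComm _
    (fun v => A.pow_eq_one_of_mem_torsionBy p) fun v _ => h v g

theorem isNilpotent_of_engelComm_eq_one {G : Type*} [hG : Group G] [Finite G]
    [Group.IsSolvable G] {m : ℕ} (h : ∀ x g : G, engelComm x g m = 1) : Group.IsNilpotent G := by
  induction G using Finite.induction_subsingleton_or_nontrivial generalizing hG with
  | hbase => infer_instance
  | hstep G ih =>
    have hcq : Nat.card (G ⧸ Subgroup.center G) < Nat.card G := by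
      rw [Subgroup.card_eq_card_quotient_mul_card_subgroup (Subgroup.center G)]
      exact lt_mul_of_one_lt_right Nat.card_pos
        ((Subgroup.one_lt_card_iff_ne_bot _).mpr (center_ne_bot_of_engelComm_eq_one h))
    refine Group.of_quotient_center_nilpotent (ih _ hcq fun x g => ?_)
    obtain ⟨x, rfl⟩ := QuotientGroup.mk_surjective x
    obtain ⟨g, rfl⟩ := QuotientGroup.mk_surjective g
    rw [← QuotientGroup.mk'_apply, ← QuotientGroup.mk'_apply, ← map_engelComm, h, map_one]

lemma isNilpotent_quotient_iff_exists_lowerCentralSeries_le {G : Type*} [Group G]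
    (N : Subgroup G) [N.Normal] :
    Group.IsNilpotent (G ⧸ N) ↔ ∃ d, (⊤ : Subgroup G).lowerCentralSeries d ≤ N := by
  have hmap (d : ℕ) : ((⊤ : Subgroup G).lowerCentralSeries d).map (QuotientGroup.mk' N) =
      (⊤ : Subgroup (G ⧸ N)).lowerCentralSeries d := by
    rw [Subgroup.map_lowerCentralSeries,
      Subgroup.map_top_of_surjective _ (QuotientGroup.mk'_surjective N)]
  simp only [Subgroup.nilpotent_iff_lowerCentralSeries, ← hmap, Subgroup.map_eq_bot_iff,
    QuotientGroup.ker_mk']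

lemma isNilpotent_quotient_of_engelComm_mem {G : Type*} [Group G] [Finite G]
    [Group.IsSolvable G] {K : Subgroup G} [K.Normal] {m : ℕ}
    (h : ∀ x g : G, engelComm x g m ∈ K) : Group.IsNilpotent (G ⧸ K) := by
  refine isNilpotent_of_engelComm_eq_one (m := m) fun x g => ?_
  obtain ⟨x, rfl⟩ := QuotientGroup.mk_surjective x
  obtain ⟨g, rfl⟩ := QuotientGroup.mk_surjective g
  rw [← QuotientGroup.mk'_apply, ← QuotientGroup.mk'_apply, ← map_engelComm,
    QuotientGroup.mk'_apply, QuotientGroup.eq_one_iff]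
  exact h x g

lemma le_fittingSubgroup {T : Type} [Group T] {N : Subgroup T} (hN : N.Normal)
    (hNnil : Group.IsNilpotent N) : N ≤ FittingSubgroup T :=
  le_iSup₂_of_le N ⟨hN, hNnil⟩ le_rfl

theorem stmt8_general (n : ℕ) (T : Type) [Group T] [Finite T]
    (hmeta : ∃ N : Subgroup T, N.Normal ∧ Group.IsNilpotent ↥N ∧
      ∃ c, (⊤ : Subgroup T).lowerCentralSeries c ≤ N) :
    ∃ c, (⊤ : Subgroup T).lowerCentralSeries c ≤
      Subgroup.closure
        {g : T | (∃ t s : T, g = engelComm t s n) ∧ g ∈ FittingSubgroup T} := by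
  obtain ⟨N, hN, hNnil, c, hc⟩ := hmeta
  have : Group.IsNilpotent (T ⧸ N) :=
    (isNilpotent_quotient_iff_exists_lowerCentralSeries_le N).mpr ⟨c, hc⟩
  have : Group.IsSolvable T :=
    (Group.isSolvable_iff_subgroup_quotient N).mpr ⟨inferInstance, inferInstance⟩
  let E : Set T := {w | ∃ t ∈ (⊤ : Subgroup T).lowerCentralSeries c, ∃ s, w = engelComm t s n}
  have hE : Group.IsNilpotent (T ⧸ Subgroup.normalClosure E) :=
    isNilpotent_quotient_of_engelComm_mem fun x g => Subgroup.subset_normalClosure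
      ⟨_, engelComm_mem_lowerCentralSeries x g c, g, engelComm_add x g c n⟩
  obtain ⟨d, hd⟩ := (isNilpotent_quotient_iff_exists_lowerCentralSeries_le _).mp hE
  refine ⟨d, hd.trans (Subgroup.closure_mono fun w hw => ?_)⟩
  obtain ⟨_, ⟨t, ht, s, rfl⟩, hconj⟩ := Group.mem_conjugatesOfSet_iff.mp hw
  obtain ⟨k, rfl⟩ := isConj_iff.mp hconj
  refine ⟨⟨k * t * k⁻¹, k * s * k⁻¹, map_engelComm (MulAut.conj k).toMonoidHom t s n⟩, ?_⟩
  exact le_fittingSubgroup hN hNnil (hN.conj_mem _ (engelComm_mem_of_mem_normal (hc ht) s n) k)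

/-- Let `w` be the `n`-th Engel word (`n ≥ 1`) and `T` a finite metanilpotent
group.  If `M` is the subgroup generated by all `w`-values of `T` contained in
the Fitting subgroup of `T`, then `T/M` is nilpotent, i.e. some term of the
lower central series of `T` is contained in `M`. -/
theorem stmt8 (n : ℕ) (hn : 1 ≤ n) (T : Type) [Group T] [Finite T]
    (hmeta : ∃ N : Subgroup T, N.Normal ∧ Group.IsNilpotent ↥N ∧
      ∃ c, (⊤ : Subgroup T).lowerCentralSeries c ≤ N) :
    ∃ c, (⊤ : Subgroup T).lowerCentralSeries c ≤
      Subgroup.closure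
        {g : T | (∃ t s : T, g = engelComm t s n) ∧ g ∈ FittingSubgroup T} :=
  stmt8_general n T hmeta
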